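/- Let λ ⊢ n and let w_0 ∈ S_n be the longest element. For any a ∈ ℕ, define V_a^λ = span{c_T | T ∈ SYT(λ), ε_n(T) ≤ a} and V_{ol(a)}^λ = span{c_T | T ∈ SYT(λ), ε_n(ev(T)) ≤ a} inside the Specht module V^λ. Then w_0(V_a^λ) = V_{ol(a)}^λ; consequently V_{ol(a)}^λ is invariant under the subgroup w_0·S_{n−1}·w_0 of S_n. -/

import Mathlib

/-!
Common combinatorial background: standard Young tableaux encoded as chains of
Young diagrams, the box-removal map `d`, box-addition `up`, the row statistic
`ε_k`, binary sequences (as functions `ℕ → Bool`), the generalised bijections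
`phi` and partial orders `leB` of Definition 4.1, and interval parabolic
subgroups of symmetric groups.
-/

open scoped BigOperators

/-- A standard Young tableau with `n` boxes, encoded as the chain of Young
diagrams `∅ = chain 0 ⊂ chain 1 ⊂ ⋯ ⊂ chain n`, where `chain k` is the shape
occupied by the entries `1, …, k`. -/
structure SYT (n : ℕ) where
  chain : ℕ → YoungDiagram
  chain_zero : chain 0 = ⊥
  chain_mono : ∀ k, chain k ≤ chain (k + 1)
  chain_card : ∀ k, k ≤ n → (chain k).card = k
  chain_stable : ∀ k, n ≤ k → chain k = chain n

namespace SYT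

/-- The shape of a standard Young tableau. -/
def shape {n : ℕ} (T : SYT n) : YoungDiagram := T.chain n

lemma chain_monotone {n : ℕ} (T : SYT n) : Monotone T.chain :=
  monotone_nat_of_le_succ T.chain_mono

/-- `ε_k(T)`: the (0-indexed) row of `T` containing the entry `k`. -/
noncomputable def row {n : ℕ} (T : SYT n) (k : ℕ) : ℕ :=
  sInf {i | ∃ j, (i, j) ∈ T.chain k ∧ (i, j) ∉ T.chain (k - 1)}

/-- `d(T)`: the tableau obtained from `T` by removing the box containing the
largest entry. -/
def d {n : ℕ} (T : SYT (n + 1)) : SYT n where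
  chain k := T.chain (min k n)
  chain_zero := by simpa using T.chain_zero
  chain_mono k := T.chain_monotone (by omega)
  chain_card k hk := by
    show (T.chain (min k n)).card = k
    rw [min_eq_left hk]; exact T.chain_card k (by omega)
  chain_stable k hk := by
    show T.chain (min k n) = T.chain (min n n)
    rw [min_eq_right hk, min_self]

/-- The one-row Young diagram with `m` cells. -/
def rowDiagram (m : ℕ) : YoungDiagram where
  cells := (Finset.range m).map ⟨fun j => (0, j), fun a b h => by simpa using h⟩
  isLowerSet := by
    rintro ⟨x1, x2⟩ ⟨y1, y2⟩ ⟨h1, h2⟩ hx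
    simp only [Finset.coe_map, Function.Embedding.coeFn_mk, Set.mem_image,
      Finset.mem_coe, Finset.mem_range, Prod.mk.injEq] at hx ⊢
    obtain ⟨j, hj, hjx⟩ := hx
    obtain ⟨rfl, rfl⟩ := Prod.mk.inj hjx
    exact ⟨y2, by omega, show ((0, y2) : ℕ × ℕ) = (y1, y2) by simp at h1; rw [h1]⟩

lemma rowDiagram_card (m : ℕ) : (rowDiagram m).card = m := by
  simp [rowDiagram, YoungDiagram.card]

lemma rowDiagram_mono {a b : ℕ} (h : a ≤ b) : rowDiagram a ≤ rowDiagram b := by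
  intro x hx
  simp only [rowDiagram, YoungDiagram.mem_mk, Finset.mem_coe, Finset.mem_map,
    Function.Embedding.coeFn_mk, Finset.mem_range, SetLike.mem_coe] at hx ⊢
  rw [← YoungDiagram.mem_cells, Finset.mem_map] at hx ⊢
  obtain ⟨j, hj, rfl⟩ := hx
  exact ⟨j, by simp at hj ⊢; omega, rfl⟩

lemma rowDiagram_zero : rowDiagram 0 = ⊥ := by
  ext x
  simp [rowDiagram, YoungDiagram.mem_mk]

/-- The one-row standard Young tableau with `n` boxes. -/
def rowSYT (n : ℕ) : SYT n where
  chain k := rowDiagram (min k n)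
  chain_zero := by simpa using rowDiagram_zero
  chain_mono k := rowDiagram_mono (by omega)
  chain_card k hk := by
    show (rowDiagram (min k n)).card = k
    rw [min_eq_left hk]; exact rowDiagram_card k
  chain_stable k hk := by
    show rowDiagram (min k n) = rowDiagram (min n n)
    rw [min_eq_right hk, min_self]

open Classical in
/-- `S⁺`: add a box containing the entry `n + 1` to `S` so that the resulting
tableau has shape `μ` (junk value if this is impossible). -/
noncomputable def up {n : ℕ} (S : SYT n) (μ : YoungDiagram) : SYT (n + 1) :=
  if h : S.shape ≤ μ ∧ μ.card = n + 1 then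
    { chain := fun k => if k ≤ n then S.chain k else μ
      chain_zero := by simpa using S.chain_zero
      chain_mono := by
        intro k
        show (if k ≤ n then S.chain k else μ) ≤ (if k + 1 ≤ n then S.chain (k + 1) else μ)
        rcases le_or_gt (k + 1) n with h2 | h2
        · rw [if_pos (by omega : k ≤ n), if_pos h2]
          exact S.chain_mono k
        · rw [if_neg (by omega : ¬ k + 1 ≤ n)]
          by_cases h1 : k ≤ n
          · rw [if_pos h1]
            have hkn : k = n := by omega
            subst hkn
            exact h.1
          · rw [if_neg h1]
      chain_card := by
        intro k hk
        show (if k ≤ n then S.chain k else μ).card = k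
        by_cases h1 : k ≤ n
        · rw [if_pos h1]; exact S.chain_card k h1
        · rw [if_neg h1]
          have : k = n + 1 := by omega
          rw [h.2, this]
      chain_stable := by
        intro k hk
        show (if k ≤ n then S.chain k else μ) = (if n + 1 ≤ n then S.chain (n + 1) else μ)
        rw [if_neg (by omega : ¬ k ≤ n), if_neg (by omega : ¬ n + 1 ≤ n)] }
  else rowSYT (n + 1)

end SYT

/-- Complementation of a binary sequence (`ol` in the paper, swapping `0` and `1`). -/
def olB (b : ℕ → Bool) : ℕ → Bool := fun i => !b i

/-- Truncation `b ↦ b_† = b₂b₃⋯` of a binary sequence. -/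
def shiftB (b : ℕ → Bool) : ℕ → Bool := fun i => b (i + 1)

/-- The generalised bijection `φ_{λ,b}` of Definition 4.1(1), defined (for an
arbitrary shape-preserving family of evacuation involutions `ev`) by
`φ_{λ,b}(T) = (φ_{μ,b_†}(d T))⁺` if `b₁ = 0` and
`φ_{λ,b}(T) = (φ_{μ,ol(b_†)}(d (ev T)))⁺` if `b₁ = 1`. -/
noncomputable def phiB (ev : ∀ m, SYT m → SYT m) : ∀ n : ℕ, (ℕ → Bool) → SYT n → SYT n
  | 0, _, T => T
  | n + 1, b, T =>
    if b 0 then (phiB ev n (olB (shiftB b)) ((ev (n + 1) T).d)).up T.shape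
    else (phiB ev n (shiftB b) T.d).up T.shape

/-- The generalised partial order `≤_{λ,b}` of Definition 4.1(2), defined
recursively (relative to a family of evacuation involutions `ev`). -/
noncomputable def leB (ev : ∀ m, SYT m → SYT m) : ∀ n : ℕ, (ℕ → Bool) → SYT n → SYT n → Prop
  | 0, _, _, _ => True
  | n + 1, b, S, T =>
    if b 0 then
      (ev (n + 1) S).row (n + 1) < (ev (n + 1) T).row (n + 1) ∨
        ((ev (n + 1) S).row (n + 1) = (ev (n + 1) T).row (n + 1) ∧
          leB ev n (olB (shiftB b)) ((ev (n + 1) S).d) ((ev (n + 1) T).d))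
    else
      S.row (n + 1) < T.row (n + 1) ∨
        (S.row (n + 1) = T.row (n + 1) ∧ leB ev n (shiftB b) S.d T.d)

/-- The strict order `<_{λ,b}`. -/
noncomputable def ltB (ev : ∀ m, SYT m → SYT m) (n : ℕ) (b : ℕ → Bool) (S T : SYT n) : Prop :=
  leB ev n b S T ∧ S ≠ T

/-- The standard parabolic subgroup `S_{[a,b]}` of `S_n` consisting of the
permutations fixing every point outside the (1-indexed) interval `[a,b]`. -/
def intervalSubgroup (n a b : ℕ) : Subgroup (Equiv.Perm (Fin n)) where
  carrier := {σ | ∀ i : Fin n, (i.val + 1 < a ∨ b < i.val + 1) → σ i = i}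
  one_mem' := fun _ _ => rfl
  mul_mem' := by
    intro σ τ hσ hτ i hi
    have : (σ * τ) i = σ (τ i) := rfl
    rw [this, hτ i hi, hσ i hi]
  inv_mem' := by
    intro σ hσ i hi
    conv_lhs => rw [← hσ i hi]
    exact σ.symm_apply_apply i

/-- The lower endpoints of the intervals in the multiplicity-free chain
labelled by a binary sequence `b` (0-indexed: `chainLo b (m-1)` is the lower
endpoint of the interval `I_m`); `b m = true` means the smallest element is
removed at the `m`-th step. -/
def chainLo (b : ℕ → Bool) : ℕ → ℕ
  | 0 => 1
  | m + 1 => chainLo b m + (if b m then 1 else 0)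

/-- The upper endpoints of the intervals in the multiplicity-free chain
labelled by a binary sequence `b`; `b m = false` means the largest element is
removed at the `m`-th step. -/
def chainHi (n : ℕ) (b : ℕ → Bool) : ℕ → ℕ
  | 0 => n
  | m + 1 => chainHi n b m - (if b m then 0 else 1)
/-!
Representation-theoretic background (all representations are over `ℚ`).
-/

/-- A submodule invariant under the action (through `ρ`) of a subgroup `H`. -/
def IsInvariantSub {G V : Type*} [Group G] [AddCommGroup V] [Module ℚ V]
    (ρ : Representation ℚ G V) (H : Subgroup G) (W : Submodule ℚ V) : Prop :=
  ∀ σ ∈ H, ∀ v ∈ W, ρ σ v ∈ W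

/-- A nonzero `H`-invariant submodule having no invariant submodule other than
`⊥` and itself, i.e. an irreducible subrepresentation of `H`. -/
def IsIrreducibleSub {G V : Type*} [Group G] [AddCommGroup V] [Module ℚ V]
    (ρ : Representation ℚ G V) (H : Subgroup G) (W : Submodule ℚ V) : Prop :=
  IsInvariantSub ρ H W ∧ W ≠ ⊥ ∧
    ∀ U : Submodule ℚ V, U ≤ W → IsInvariantSub ρ H U → U = ⊥ ∨ U = W

/-- `Iso a b μ` is the `μ`-isotypic component of the restriction of `V` to the
standard parabolic subgroup `S_{[a,b]}`, for every interval `[a,b] ⊆ [1,n]` and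
partition `μ` of `b - a + 1` (encoded as a Young diagram with `b - a + 1`
cells).  This predicate records the characterising properties of such a
labelled family of isotypic components: each `Iso a b μ` is `S_{[a,b]}`-
invariant, together they decompose `V`, distinct labels give disjoint
components, and every irreducible `S_{[a,b]}`-subrepresentation lies in one of
them. -/
def IsIsotypicLabelling {V : Type*} [AddCommGroup V] [Module ℚ V] (n : ℕ)
    (ρ : Representation ℚ (Equiv.Perm (Fin n)) V)
    (Iso : ℕ → ℕ → YoungDiagram → Submodule ℚ V) : Prop :=
  ∀ a b : ℕ, 1 ≤ a → a ≤ b → b ≤ n →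
    (∀ μ : YoungDiagram, IsInvariantSub ρ (intervalSubgroup n a b) (Iso a b μ)) ∧
    (⨆ (μ : YoungDiagram) (_ : μ.card = b - a + 1), Iso a b μ) = ⊤ ∧
    (∀ μ ν : YoungDiagram, μ ≠ ν → Disjoint (Iso a b μ) (Iso a b ν)) ∧
    (∀ W : Submodule ℚ V, IsIrreducibleSub ρ (intervalSubgroup n a b) W →
      ∃ μ : YoungDiagram, μ.card = b - a + 1 ∧ W ≤ Iso a b μ)

/-- `v` is a `b`-Gelfand-Tsetlin vector of type `T` (Definition 3.2): for each
`1 ≤ m ≤ n - 1` it lies in the `μ^m`-isotypic component of the restriction of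
`V` to the `m`-th group `G_m` of the multiplicity-free chain labelled by `b`,
where `μ^m = T.chain (n - m + 1)` is the `m`-th partition in the chain of
partitions corresponding to the standard Young tableau `T`. -/
def IsGTvec {V : Type*} [AddCommGroup V] [Module ℚ V] (n : ℕ)
    (Iso : ℕ → ℕ → YoungDiagram → Submodule ℚ V)
    (b : ℕ → Bool) (T : SYT n) (v : V) : Prop :=
  ∀ m : ℕ, 1 ≤ m → m ≤ n - 1 →
    v ∈ Iso (chainLo b (m - 1)) (chainHi n b (m - 1)) (T.chain (n - m + 1))

/-- A family `v` indexed by the standard Young tableaux of shape `lam` is a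
`b`-Gelfand-Tsetlin basis: it is a basis of `V` and each `v T` is a `b`-GT
vector of type `T`. -/
def IsGTBasis {V : Type*} [AddCommGroup V] [Module ℚ V] (n : ℕ) (lam : YoungDiagram)
    (Iso : ℕ → ℕ → YoungDiagram → Submodule ℚ V)
    (b : ℕ → Bool) (v : SYT n → V) : Prop :=
  LinearIndependent ℚ (fun T : {T : SYT n // T.shape = lam} => v T.1) ∧
  Submodule.span ℚ (v '' {T : SYT n | T.shape = lam}) = ⊤ ∧
  ∀ T : SYT n, T.shape = lam → IsGTvec n Iso b T (v T)

/-- `c` is a basis of `V` indexed by the standard Young tableaux of shape `lam`. -/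
def IsBasisFamily {V : Type*} [AddCommGroup V] [Module ℚ V] (n : ℕ) (lam : YoungDiagram)
    (c : SYT n → V) : Prop :=
  LinearIndependent ℚ (fun T : {T : SYT n // T.shape = lam} => c T.1) ∧
  Submodule.span ℚ (c '' {T : SYT n | T.shape = lam}) = ⊤

/-- The Kazhdan-Lusztig filtration subspace
`V_a^λ = span {c_T ∣ T ∈ SYT(λ), ε_n(T) ≤ a}`. -/
def klFilt {V : Type*} [AddCommGroup V] [Module ℚ V] (n : ℕ) (c : SYT n → V)
    (lam : YoungDiagram) (a : ℕ) : Submodule ℚ V :=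
  Submodule.span ℚ {x | ∃ T : SYT n, T.shape = lam ∧ T.row n ≤ a ∧ x = c T}

/-- The variant `span {c_T ∣ T ∈ SYT(λ), ε_n(T) < a}` of the KL filtration;
for `a = a_k` a removable row, this equals `V_{a_{k-1}}^λ` (with `V_{a_0} = 0`). -/
def klFiltLt {V : Type*} [AddCommGroup V] [Module ℚ V] (n : ℕ) (c : SYT n → V)
    (lam : YoungDiagram) (a : ℕ) : Submodule ℚ V :=
  Submodule.span ℚ {x | ∃ T : SYT n, T.shape = lam ∧ T.row n < a ∧ x = c T}

/-- The twisted Kazhdan-Lusztig filtration subspace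
`V_{ol(a)}^λ = span {c_T ∣ T ∈ SYT(λ), ε_n(ev T) ≤ a}`. -/
def klFiltBar {V : Type*} [AddCommGroup V] [Module ℚ V] (n : ℕ) (c : SYT n → V)
    (lam : YoungDiagram) (ev : ∀ m, SYT m → SYT m) (a : ℕ) : Submodule ℚ V :=
  Submodule.span ℚ {x | ∃ T : SYT n, T.shape = lam ∧ (ev n T).row n ≤ a ∧ x = c T}

/-- The strict variant `span {c_T ∣ T ∈ SYT(λ), ε_n(ev T) < a}`. -/
def klFiltBarLt {V : Type*} [AddCommGroup V] [Module ℚ V] (n : ℕ) (c : SYT n → V)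
    (lam : YoungDiagram) (ev : ∀ m, SYT m → SYT m) (a : ℕ) : Submodule ℚ V :=
  Submodule.span ℚ {x | ∃ T : SYT n, T.shape = lam ∧ (ev n T).row n < a ∧ x = c T}

/-- The theorem of Berenstein-Zelevinsky, Mathas and Stembridge: the longest
element `w₀` acts on the Kazhdan-Lusztig basis by `w₀ ⬝ c_T = ε ⬝ c_{ev T}`,
where the sign `ε = ±1` depends only on the shape. -/
def MBSprop {V : Type*} [AddCommGroup V] [Module ℚ V] (n : ℕ) (lam : YoungDiagram)
    (ρ : Representation ℚ (Equiv.Perm (Fin n)) V) (c : SYT n → V)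
    (ev : ∀ m, SYT m → SYT m) (ε : ℚ) : Prop :=
  (ε = 1 ∨ ε = -1) ∧ ∀ T : SYT n, T.shape = lam → ρ Fin.revPerm (c T) = ε • c (ev n T)

/-- `lam` (a partition of `n`) has exactly `r` removable boxes, appearing in the
(0-indexed, strictly increasing) rows `a 1 < a 2 < ⋯ < a r`, and `μd k` is the
partition of `n - 1` obtained from `lam` by removing the box in row `a k`. -/
def IsRemovableData (n : ℕ) (lam : YoungDiagram) (r : ℕ) (a : ℕ → ℕ)
    (μd : ℕ → YoungDiagram) : Prop :=
  (∀ k, 1 ≤ k → k ≤ r →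
    μd k ≤ lam ∧ (μd k).card = n - 1 ∧ ∃ j, lam.cells \ (μd k).cells = {(a k, j)}) ∧
  (∀ k l, 1 ≤ k → k < l → l ≤ r → a k < a l) ∧
  (∀ ν : YoungDiagram, ν ≤ lam → ν.card = n - 1 → ∃ k, 1 ≤ k ∧ k ≤ r ∧ ν = μd k)

/-- The identification of `Fin n` with the subtype of `Fin (n + 1)` of elements
less than `n`. -/
def finCastEquiv (n : ℕ) : Fin n ≃ {i : Fin (n + 1) // i.val < n} where
  toFun i := ⟨⟨i.val, by omega⟩, i.isLt⟩
  invFun x := ⟨x.1.val, x.2⟩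
  left_inv i := rfl
  right_inv x := rfl

/-- The standard inclusion `S_{n} ↪ S_{n+1}` (as the subgroup fixing the last
point). -/
def permIncl (n : ℕ) : Equiv.Perm (Fin n) →* Equiv.Perm (Fin (n + 1)) :=
  Equiv.Perm.extendDomainHom (finCastEquiv n)

lemma permIncl_mem (n : ℕ) (σ : Equiv.Perm (Fin n)) :
    permIncl n σ ∈ intervalSubgroup (n + 1) 1 n := by
  intro i hi
  have hni : ¬ (i.val < n) := by rcases hi with h | h <;> omega
  simpa [permIncl, Equiv.Perm.extendDomainHom] using
    Equiv.Perm.extendDomain_apply_not_subtype σ (finCastEquiv n) hni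

/-!
By the theorem of Berenstein–Zelevinsky, Mathas and Stembridge, `w₀` permutes the
Kazhdan–Lusztig basis up to the sign `±1` through evacuation, so it carries the span of
`{c_T ∣ ε_n(T) ≤ a}` onto the span of `{c_{ev T} ∣ ε_n(T) ≤ a}`, which is `V_{ol(a)}^λ`
because evacuation is a shape-preserving involution. Transporting the `S_{n-1}`-invariance
of `V_a^λ` along `w₀` gives the invariance of `V_{ol(a)}^λ` under `w₀ S_{n-1} w₀`.
-/

open Pointwise in
theorem Submodule.map_span_image_of_apply_eq_smul {R M ι : Type*} [CommRing R]
    [AddCommGroup M] [Module R M] (f : M →ₗ[R] M) (c : ι → M) (e : ι → ι) {r : R}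
    (hr : IsUnit r) {s : Set ι} (hf : ∀ i ∈ s, f (c i) = r • c (e i)) :
    (Submodule.span R (c '' s)).map f = Submodule.span R (c '' (e '' s)) := by
  have himage : f '' (c '' s) = r • (c '' (e '' s)) := by
    rw [Set.image_image, Set.image_image, ← Set.image_smul, Set.image_image]
    exact Set.image_congr hf
  rw [Submodule.map_span, himage, Submodule.span_smul_eq_of_isUnit _ _ hr]

theorem IsInvariantSub.map_conj {G V : Type*} [Group G] [AddCommGroup V] [Module ℚ V]
    {ρ : Representation ℚ G V} {H : Subgroup G} {W : Submodule ℚ V}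
    (hW : IsInvariantSub ρ H W) (g : G) :
    IsInvariantSub ρ (H.map (MulAut.conj g).toMonoidHom) (W.map (ρ g)) := by
  rintro _ ⟨h, hh, rfl⟩ _ ⟨v, hv, rfl⟩
  refine ⟨ρ h v, hW h hh v hv, ?_⟩
  rw [MulEquiv.toMonoidHom_eq_coe, MonoidHom.coe_coe, MulAut.conj_apply, mul_assoc, map_mul,
    map_mul, Module.End.mul_apply, Module.End.mul_apply, Representation.inv_self_apply]

section KLFiltration

variable {V : Type*} [AddCommGroup V] [Module ℚ V] {n : ℕ} (c : SYT n → V)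
  (lam : YoungDiagram) (ev : ∀ m, SYT m → SYT m) (a : ℕ)

theorem klFilt_eq_span_image :
    klFilt n c lam a = Submodule.span ℚ (c '' {T | T.shape = lam ∧ T.row n ≤ a}) := by
  simp only [klFilt, Set.image, Set.mem_ofPred_eq, and_assoc, eq_comm]

theorem klFiltBar_eq_span_image :
    klFiltBar n c lam ev a =
      Submodule.span ℚ (c '' {T | T.shape = lam ∧ (ev n T).row n ≤ a}) := by
  simp only [klFiltBar, Set.image, Set.mem_ofPred_eq, and_assoc, eq_comm]

theorem map_klFilt_eq_klFiltBar {ρ : Representation ℚ (Equiv.Perm (Fin n)) V} {ε : ℚ}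
    (hMBS : MBSprop n lam ρ c ev ε) (hev_shape : ∀ T : SYT n, (ev n T).shape = T.shape)
    (hev_invol : Function.Involutive (ev n)) :
    (klFilt n c lam a).map (ρ Fin.revPerm) = klFiltBar n c lam ev a := by
  obtain ⟨hε, hact⟩ := hMBS
  have hunit : IsUnit ε := by rcases hε with rfl | rfl <;> simp
  have hev_image : ev n '' {T | T.shape = lam ∧ T.row n ≤ a} =
      {T | T.shape = lam ∧ (ev n T).row n ≤ a} := by
    rw [Set.image_eq_preimage_of_inverse hev_invol.leftInverse hev_invol.rightInverse]
    ext T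
    simp only [Set.mem_preimage, Set.mem_ofPred_eq, hev_shape]
  rw [klFilt_eq_span_image, klFiltBar_eq_span_image, ← hev_image]
  exact Submodule.map_span_image_of_apply_eq_smul _ c _ hunit fun T hT => hact T hT.1

end KLFiltration

theorem w0_maps_kl_filtration_to_twisted_filtration_general
    (n : ℕ)
    (lam : YoungDiagram)
    (ev : ∀ m, SYT m → SYT m)
    (hev_shape : ∀ m (T : SYT m), (ev m T).shape = T.shape)
    (hev_invol : ∀ m, Function.Involutive (ev m))
    (V : Type*) [AddCommGroup V] [Module ℚ V]
    (ρ : Representation ℚ (Equiv.Perm (Fin n)) V)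
    (c : SYT n → V)
    (ε : ℚ) (hMBS : MBSprop n lam ρ c ev ε)
    (hGY : ∀ a : ℕ, IsInvariantSub ρ (intervalSubgroup n 1 (n - 1)) (klFilt n c lam a)) :
    ∀ a : ℕ,
      Submodule.map (ρ (Fin.revPerm : Equiv.Perm (Fin n))) (klFilt n c lam a) =
        klFiltBar n c lam ev a ∧
      IsInvariantSub ρ
        (Subgroup.map (MulAut.conj (Fin.revPerm : Equiv.Perm (Fin n))).toMonoidHom
          (intervalSubgroup n 1 (n - 1)))
        (klFiltBar n c lam ev a) := by
  intro a
  have hmap := map_klFilt_eq_klFiltBar c lam ev a hMBS (hev_shape n) (hev_invol n)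
  exact ⟨hmap, hmap ▸ (hGY a).map_conj Fin.revPerm⟩

theorem w0_maps_kl_filtration_to_twisted_filtration
    (n : ℕ) (hn : 2 ≤ n)
    (lam : YoungDiagram) (hlam : lam.card = n)
    (ev : ∀ m, SYT m → SYT m)
    (hev_shape : ∀ m (T : SYT m), (ev m T).shape = T.shape)
    (hev_invol : ∀ m, Function.Involutive (ev m))
    (V : Type*) [AddCommGroup V] [Module ℚ V]
    (ρ : Representation ℚ (Equiv.Perm (Fin n)) V)
    (hirr : IsIrreducibleSub ρ (⊤ : Subgroup (Equiv.Perm (Fin n))) (⊤ : Submodule ℚ V))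
    (c : SYT n → V) (hc : IsBasisFamily n lam c)
    (ε : ℚ) (hMBS : MBSprop n lam ρ c ev ε)
    (hGY : ∀ a : ℕ, IsInvariantSub ρ (intervalSubgroup n 1 (n - 1)) (klFilt n c lam a)) :
    ∀ a : ℕ,
      Submodule.map (ρ (Fin.revPerm : Equiv.Perm (Fin n))) (klFilt n c lam a) =
        klFiltBar n c lam ev a ∧
      IsInvariantSub ρ
        (Subgroup.map (MulAut.conj (Fin.revPerm : Equiv.Perm (Fin n))).toMonoidHom
          (intervalSubgroup n 1 (n - 1)))
        (klFiltBar n c lam ev a) :=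
  w0_maps_kl_filtration_to_twisted_filtration_general n lam ev hev_shape hev_invol V ρ c ε hMBS hGY
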